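/- If X_1, ..., X_m ∈ M_n(ℂ) are accretive-dissipative, then ω(X_1 X_2 ⋯ X_m) ≤ 2^{m/2} ∏_{j=1}^m ω(X_j). -/

import Mathlib

/-!
Since `ω(Y) ≤ ‖Y‖` and the operator norm is submultiplicative, it suffices to show
`‖X‖ ≤ √2 ω(X)` for accretive-dissipative `X`. Write `X = A + iB` with `A, B ≥ 0`, and for unit
vectors `x, y` let `a + ib = ⟨Xx, x⟩`, `c + id = ⟨Xy, y⟩`, so `a, b, c, d ≥ 0`. Cauchy–Schwarz for
the semi-inner products of `A` and `B` gives `|⟨Xx, y⟩| ≤ √(ac) + √(bd) ≤ √((a + b)(c + d))`, and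
`a + b ≤ √2 |a + ib| ≤ √2 ω(X)`, likewise `c + d ≤ √2 ω(X)`.
-/

open Matrix Complex
open scoped ComplexOrder

/-- Hermitian real part `(X + Xᴴ)/2`. -/
noncomputable def reM {m : ℕ} (X : Matrix (Fin m) (Fin m) ℂ) : Matrix (Fin m) (Fin m) ℂ :=
  (1 / 2 : ℂ) • (X + Xᴴ)

/-- Hermitian imaginary part `(X - Xᴴ)/(2i)`. -/
noncomputable def imM {m : ℕ} (X : Matrix (Fin m) (Fin m) ℂ) : Matrix (Fin m) (Fin m) ℂ :=
  (-Complex.I / 2) • (X - Xᴴ)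

/-- Numerical range `W(X) = {⟨Xx, x⟩ : ‖x‖ = 1}`. -/
noncomputable def numRange {m : ℕ} (X : Matrix (Fin m) (Fin m) ℂ) : Set ℂ :=
  {z | ∃ x : EuclideanSpace ℂ (Fin m), ‖x‖ = 1 ∧ z = star (x : Fin m → ℂ) ⬝ᵥ X.mulVec x}

/-- Numerical radius `ω(X) = sup {|z| : z ∈ W(X)}`. -/
noncomputable def numRadius {m : ℕ} (X : Matrix (Fin m) (Fin m) ℂ) : ℝ :=
  sSup ((fun z : ℂ => ‖z‖) '' numRange X)

/-- The sector `S_α`. -/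
def sector (α : ℝ) : Set ℂ := {z : ℂ | 0 < z.re ∧ |z.im| ≤ Real.tan α * z.re}

/-- Operator norm of a matrix acting on Euclidean space. -/
noncomputable def opNorm {m : ℕ} (X : Matrix (Fin m) (Fin m) ℂ) : ℝ :=
  ‖Matrix.toEuclideanCLM (𝕜 := ℂ) X‖

namespace Matrix

variable {ι : Type*} [Fintype ι]

lemma star_dotProduct_conjTranspose_mulVec (X : Matrix ι ι ℂ) (x : ι → ℂ) :
    star x ⬝ᵥ Xᴴ *ᵥ x = starRingEnd ℂ (star x ⬝ᵥ X *ᵥ x) := by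
  rw [starRingEnd_apply, star_dotProduct, star_mulVec, dotProduct_mulVec,
    conjTranspose_conjTranspose]

lemma PosSemidef.norm_star_dotProduct_mulVec_le {A : Matrix ι ι ℂ} (hA : A.PosSemidef)
    (x y : ι → ℂ) :
    ‖star y ⬝ᵥ A *ᵥ x‖ ≤ √(star x ⬝ᵥ A *ᵥ x).re * √(star y ⬝ᵥ A *ᵥ y).re := by
  -- Cauchy–Schwarz for the inner product `⟪x, y⟫ = xᴴ A y` that `A` induces on `ι → ℂ`.
  let _ := A.toSeminormedAddCommGroup hA
  let _ := A.toInnerProductSpace hA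
  have h := norm_inner_le_norm (𝕜 := ℂ) y x
  rw [norm_eq_sqrt_re_inner (𝕜 := ℂ) x, norm_eq_sqrt_re_inner (𝕜 := ℂ) y, mul_comm] at h
  rw [dotProduct_comm _ (A *ᵥ x), dotProduct_comm _ (A *ᵥ y), dotProduct_comm _ (A *ᵥ x)]
  exact h

end Matrix

section

variable {n : ℕ}

lemma star_dotProduct_reM_mulVec (X : Matrix (Fin n) (Fin n) ℂ) (x : Fin n → ℂ) :
    star x ⬝ᵥ reM X *ᵥ x = ((star x ⬝ᵥ X *ᵥ x).re : ℂ) := by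
  rw [reM, smul_mulVec, dotProduct_smul, add_mulVec, dotProduct_add,
    star_dotProduct_conjTranspose_mulVec, add_conj, smul_eq_mul]
  push_cast
  ring

lemma star_dotProduct_imM_mulVec (X : Matrix (Fin n) (Fin n) ℂ) (x : Fin n → ℂ) :
    star x ⬝ᵥ imM X *ᵥ x = ((star x ⬝ᵥ X *ᵥ x).im : ℂ) := by
  rw [imM, smul_mulVec, dotProduct_smul, sub_mulVec, dotProduct_sub,
    star_dotProduct_conjTranspose_mulVec, sub_conj, smul_eq_mul]
  push_cast
  linear_combination (-(star x ⬝ᵥ X *ᵥ x).im : ℂ) * I_sq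

lemma reM_add_I_smul_imM (X : Matrix (Fin n) (Fin n) ℂ) : reM X + I • imM X = X := by
  rw [reM, imM, smul_smul]
  linear_combination (norm := module) I_sq • ((-1 / 2 : ℂ) • (X - Xᴴ))

lemma star_dotProduct_mulVec_eq_inner (X : Matrix (Fin n) (Fin n) ℂ)
    (x y : EuclideanSpace ℂ (Fin n)) :
    star (y : Fin n → ℂ) ⬝ᵥ X *ᵥ (x : Fin n → ℂ) = inner ℂ y (toEuclideanCLM (𝕜 := ℂ) X x) := by
  rw [EuclideanSpace.inner_eq_star_dotProduct, ofLp_toEuclideanCLM, dotProduct_comm]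

lemma norm_le_opNorm_of_mem_numRange {X : Matrix (Fin n) (Fin n) ℂ} {z : ℂ}
    (hz : z ∈ numRange X) : ‖z‖ ≤ opNorm X := by
  obtain ⟨x, hx, rfl⟩ := hz
  rw [star_dotProduct_mulVec_eq_inner]
  calc _ ≤ ‖x‖ * ‖toEuclideanCLM (𝕜 := ℂ) X x‖ := norm_inner_le_norm _ _
    _ ≤ ‖x‖ * (opNorm X * ‖x‖) := by gcongr; exact ContinuousLinearMap.le_opNorm _ _
    _ = opNorm X := by rw [hx, one_mul, mul_one]

lemma bddAbove_norm_numRange (X : Matrix (Fin n) (Fin n) ℂ) :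
    BddAbove ((fun z : ℂ => ‖z‖) '' numRange X) :=
  ⟨opNorm X, by rintro - ⟨z, hz, rfl⟩; exact norm_le_opNorm_of_mem_numRange hz⟩

lemma numRadius_nonneg (X : Matrix (Fin n) (Fin n) ℂ) : 0 ≤ numRadius X :=
  Real.sSup_nonneg (by rintro - ⟨z, -, rfl⟩; exact norm_nonneg z)

lemma numRadius_le_opNorm (X : Matrix (Fin n) (Fin n) ℂ) : numRadius X ≤ opNorm X :=
  Real.sSup_le (by rintro - ⟨z, hz, rfl⟩; exact norm_le_opNorm_of_mem_numRange hz)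
    (norm_nonneg _)

lemma norm_star_dotProduct_mulVec_le_numRadius (X : Matrix (Fin n) (Fin n) ℂ)
    {x : EuclideanSpace ℂ (Fin n)} (hx : ‖x‖ = 1) :
    ‖star (x : Fin n → ℂ) ⬝ᵥ X *ᵥ (x : Fin n → ℂ)‖ ≤ numRadius X :=
  le_csSup (bddAbove_norm_numRange X) ⟨_, ⟨x, hx, rfl⟩, rfl⟩

end

lemma sqrt_re_mul_sqrt_re_add_sqrt_im_mul_sqrt_im_le {z w : ℂ} {r : ℝ}
    (hz : 0 ≤ z.re ∧ 0 ≤ z.im) (hw : 0 ≤ w.re ∧ 0 ≤ w.im) (hzr : ‖z‖ ≤ r) (hwr : ‖w‖ ≤ r) :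
    √z.re * √w.re + √z.im * √w.im ≤ √2 * r := by
  have hr : 0 ≤ r := (norm_nonneg z).trans hzr
  have sum_le (u : ℂ) (hu : 0 ≤ u.re ∧ 0 ≤ u.im) (hur : ‖u‖ ≤ r) : u.re + u.im ≤ √2 * r := by
    have hsq : ‖u‖ ^ 2 = u.re ^ 2 + u.im ^ 2 := by rw [Complex.sq_norm, normSq_apply]; ring
    apply abs_le_of_sq_le_sq' _ (by positivity) |>.2
    rw [mul_pow, Real.sq_sqrt zero_le_two]
    nlinarith [sq_nonneg (u.re - u.im), pow_le_pow_left₀ (norm_nonneg u) hur 2]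
  calc √z.re * √w.re + √z.im * √w.im ≤ √((z.re + z.im) * (w.re + w.im)) := by
        rw [Real.le_sqrt (by positivity) (by nlinarith)]
        nlinarith [sq_nonneg (√z.re * √w.im - √z.im * √w.re), Real.sq_sqrt hz.1, Real.sq_sqrt hz.2,
          Real.sq_sqrt hw.1, Real.sq_sqrt hw.2]
    _ ≤ √((√2 * r) * (√2 * r)) := by
        gcongr
        · linarith
        · exact sum_le z hz hzr
        · exact sum_le w hw hwr
    _ = √2 * r := Real.sqrt_mul_self (by positivity)

section

variable {n : ℕ} {X : Matrix (Fin n) (Fin n) ℂ}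

lemma norm_star_dotProduct_mulVec_le_sqrt_two_mul_numRadius
    (h₁ : (reM X).PosSemidef) (h₂ : (imM X).PosSemidef)
    {x y : EuclideanSpace ℂ (Fin n)} (hx : ‖x‖ = 1) (hy : ‖y‖ = 1) :
    ‖star (y : Fin n → ℂ) ⬝ᵥ X *ᵥ (x : Fin n → ℂ)‖ ≤ √2 * numRadius X := by
  have hre := h₁.norm_star_dotProduct_mulVec_le x y
  have him := h₂.norm_star_dotProduct_mulVec_le x y
  have hre₀ := h₁.re_dotProduct_nonneg
  have him₀ := h₂.re_dotProduct_nonneg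
  simp only [star_dotProduct_reM_mulVec, star_dotProduct_imM_mulVec, RCLike.re_to_complex,
    ofReal_re] at hre him hre₀ him₀
  calc ‖star (y : Fin n → ℂ) ⬝ᵥ X *ᵥ (x : Fin n → ℂ)‖
      = ‖star (y : Fin n → ℂ) ⬝ᵥ reM X *ᵥ (x : Fin n → ℂ)
          + I * star (y : Fin n → ℂ) ⬝ᵥ imM X *ᵥ (x : Fin n → ℂ)‖ := by
        nth_rw 1 [← reM_add_I_smul_imM X]
        rw [add_mulVec, dotProduct_add, smul_mulVec, dotProduct_smul, smul_eq_mul]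
    _ ≤ ‖star (y : Fin n → ℂ) ⬝ᵥ reM X *ᵥ (x : Fin n → ℂ)‖
          + ‖star (y : Fin n → ℂ) ⬝ᵥ imM X *ᵥ (x : Fin n → ℂ)‖ := by
        grw [norm_add_le, norm_mul, norm_I, one_mul]
    _ ≤ _ := add_le_add hre him
    _ ≤ √2 * numRadius X :=
        sqrt_re_mul_sqrt_re_add_sqrt_im_mul_sqrt_im_le ⟨hre₀ _, him₀ _⟩ ⟨hre₀ _, him₀ _⟩
          (norm_star_dotProduct_mulVec_le_numRadius X hx)
          (norm_star_dotProduct_mulVec_le_numRadius X hy)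

lemma opNorm_le_sqrt_two_mul_numRadius (h₁ : (reM X).PosSemidef) (h₂ : (imM X).PosSemidef) :
    opNorm X ≤ √2 * numRadius X := by
  refine ContinuousLinearMap.opNorm_le_of_re_inner_le (by have := numRadius_nonneg X; positivity)
    fun x y hx hy => ?_
  calc RCLike.re (inner ℂ (toEuclideanCLM (𝕜 := ℂ) X x) y)
      ≤ ‖inner ℂ y (toEuclideanCLM (𝕜 := ℂ) X x)‖ :=
        (RCLike.re_le_norm _).trans_eq (norm_inner_symm _ _)
    _ ≤ √2 * numRadius X := by
        rw [← star_dotProduct_mulVec_eq_inner]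
        exact norm_star_dotProduct_mulVec_le_sqrt_two_mul_numRadius h₁ h₂ hx hy

end

lemma norm_list_prod_ofFn_le {R : Type*} [SeminormedRing R] (h₁ : ‖(1 : R)‖ ≤ 1) {m : ℕ}
    (f : Fin m → R) : ‖(List.ofFn f).prod‖ ≤ ∏ j, ‖f j‖ := by
  induction m with
  | zero => simpa using h₁
  | succ m ih =>
    rw [List.ofFn_succ, List.prod_cons, Fin.prod_univ_succ]
    exact (norm_mul_le _ _).trans (by gcongr; exact ih _)

lemma opNorm_list_prod_ofFn_le {n m : ℕ} (X : Fin m → Matrix (Fin n) (Fin n) ℂ) :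
    opNorm (List.ofFn X).prod ≤ ∏ j, opNorm (X j) := by
  rw [opNorm, map_list_prod, List.map_ofFn]
  exact norm_list_prod_ofFn_le ContinuousLinearMap.norm_id_le _

theorem numRadius_list_prod_le_of_accretiveDissipative_general {n m : ℕ}
    (X : Fin m → Matrix (Fin n) (Fin n) ℂ)
    (h₁ : ∀ j, (reM (X j)).PosDef) (h₂ : ∀ j, (imM (X j)).PosDef) :
    numRadius (List.ofFn X).prod ≤ (2 : ℝ) ^ ((m : ℝ) / 2) * ∏ j : Fin m, numRadius (X j) := by
  have hpow : (2 : ℝ) ^ ((m : ℝ) / 2) = √2 ^ m := by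
    rw [Real.sqrt_eq_rpow, ← Real.rpow_natCast, ← Real.rpow_mul zero_le_two, one_div_mul_eq_div]
  calc numRadius (List.ofFn X).prod ≤ opNorm (List.ofFn X).prod := numRadius_le_opNorm _
    _ ≤ ∏ j, opNorm (X j) := opNorm_list_prod_ofFn_le X
    _ ≤ ∏ j, √2 * numRadius (X j) := Finset.prod_le_prod (fun j _ => norm_nonneg _)
        fun j _ => opNorm_le_sqrt_two_mul_numRadius (h₁ j).posSemidef (h₂ j).posSemidef
    _ = (2 : ℝ) ^ ((m : ℝ) / 2) * ∏ j, numRadius (X j) := by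
        rw [Finset.prod_mul_distrib, Finset.prod_const, Finset.card_univ, Fintype.card_fin, hpow]

theorem numRadius_list_prod_le_of_accretiveDissipative {n m : ℕ} (hm : 0 < m)
    (X : Fin m → Matrix (Fin n) (Fin n) ℂ)
    (h₁ : ∀ j, (reM (X j)).PosDef) (h₂ : ∀ j, (imM (X j)).PosDef) :
    numRadius (List.ofFn X).prod ≤ (2 : ℝ) ^ ((m : ℝ) / 2) * ∏ j : Fin m, numRadius (X j) :=
  numRadius_list_prod_le_of_accretiveDissipative_general X h₁ h₂
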